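/- Let K be a symmetric convex body in ℝⁿ (K = −K), let x, y ∈ ℝⁿ, and b > 0. Then (cos θ)·x + b(sin θ)·y ∈ K for all θ ∈ ℝ if and only if ⟨x,w⟩² + b²·⟨y,w⟩² ≤ 1 for all w ∈ K*. -/

import Mathlib

/-- A convex body in ℝⁿ: a compact convex set with nonempty interior. -/
def IsConvexBody {n : ℕ} (K : Set (EuclideanSpace ℝ (Fin n))) : Prop :=
  IsCompact K ∧ Convex ℝ K ∧ (interior K).Nonempty

/-- The polar `K* = { w : ⟨z, w⟩ ≤ 1 for all z ∈ K }`. -/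
def polarSet {n : ℕ} (K : Set (EuclideanSpace ℝ (Fin n))) : Set (EuclideanSpace ℝ (Fin n)) :=
  { w | ∀ z ∈ K, (inner ℝ z w : ℝ) ≤ 1 }

/-
The point `(cos θ) • x + (b sin θ) • y` pairs with `w` to `cos θ · a + sin θ · c`, where
`a = ⟨x, w⟩` and `c = b ⟨y, w⟩`, and the supremum of this over `θ` is `√(a² + c²)`.
So the ellipse lies in `K` iff it lies in every half-space `{⟨·, w⟩ ≤ 1}`, `w ∈ K*`, iff
`a² + c² ≤ 1` for all `w ∈ K*`. The first equivalence is the bipolar theorem for the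
closed convex set `K ∋ 0` (symmetry puts `0` in `K`), proved by Hahn–Banach separation.
-/

open Real

theorem forall_cos_mul_add_sin_mul_le_one_iff (a c : ℝ) :
    (∀ θ : ℝ, cos θ * a + sin θ * c ≤ 1) ↔ a ^ 2 + c ^ 2 ≤ 1 := by
  constructor
  · intro h
    set z : ℂ := ⟨a, c⟩
    -- at `θ = arg z` the left side is `‖z‖`
    have hr : ‖z‖ * (cos z.arg * a + sin z.arg * c) = ‖z‖ ^ 2 := by
      rw [Complex.sq_norm, Complex.normSq_mk, mul_add, ← mul_assoc, ← mul_assoc,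
        Complex.norm_mul_cos_arg, Complex.norm_mul_sin_arg]
    have hsq : ‖z‖ ^ 2 = a ^ 2 + c ^ 2 := by
      rw [Complex.sq_norm, Complex.normSq_mk]; ring
    have hle : ‖z‖ ^ 2 ≤ ‖z‖ := hr ▸ mul_le_of_le_one_right (norm_nonneg z) (h z.arg)
    have hz1 : ‖z‖ ≤ 1 := by nlinarith
    rw [← hsq]
    exact pow_le_one₀ (norm_nonneg z) hz1
  · intro h θ
    have hcs : (cos θ * a + sin θ * c) ^ 2 ≤ a ^ 2 + c ^ 2 := by
      nlinarith [sq_nonneg (cos θ * c - sin θ * a), sin_sq_add_cos_sq θ]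
    nlinarith

theorem mem_iff_forall_mem_polarSet_inner_le_one {n : ℕ} {K : Set (EuclideanSpace ℝ (Fin n))}
    (hconv : Convex ℝ K) (hclosed : IsClosed K) (h0 : 0 ∈ K) (z : EuclideanSpace ℝ (Fin n)) :
    z ∈ K ↔ ∀ w ∈ polarSet K, inner ℝ z w ≤ 1 := by
  refine ⟨fun hz w hw => hw z hz, fun h => ?_⟩
  by_contra hz
  obtain ⟨f, u, hfK, hfz⟩ := geometric_hahn_banach_closed_point hconv hclosed hz
  have hu : 0 < u := by simpa using hfK 0 h0
  set v := (InnerProductSpace.toDual ℝ _).symm f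
  have hf : ∀ p, f p = inner ℝ p v := fun p => by
    rw [real_inner_comm, InnerProductSpace.toDual_symm_apply]
  have hpolar : u⁻¹ • v ∈ polarSet K := fun p hp => by
    rw [inner_smul_right, inv_mul_le_one₀ hu, ← hf]
    exact (hfK p hp).le
  have hz1 := h _ hpolar
  rw [inner_smul_right, inv_mul_le_one₀ hu, ← hf] at hz1
  exact hz1.not_gt hfz

theorem stmt_16_general {n : ℕ} (K : Set (EuclideanSpace ℝ (Fin n)))
    (hK : IsConvexBody K) (hsym : K = -K) (x y : EuclideanSpace ℝ (Fin n))
    (b : ℝ) :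
    (∀ θ : ℝ, (Real.cos θ) • x + (b * Real.sin θ) • y ∈ K) ↔
      ∀ w ∈ polarSet K, (inner ℝ x w : ℝ) ^ 2 + b ^ 2 * (inner ℝ y w : ℝ) ^ 2 ≤ 1 := by
  obtain ⟨hcompact, hconv, hint⟩ := hK
  have h0 : (0 : EuclideanSpace ℝ (Fin n)) ∈ K :=
    ConvexBody.zero_mem_of_symmetric ⟨K, hconv, hcompact, hint.mono interior_subset⟩
      fun z (hz : z ∈ K) => show -z ∈ K by rwa [hsym, Set.neg_mem_neg]
  calc (∀ θ : ℝ, cos θ • x + (b * sin θ) • y ∈ K)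
      ↔ ∀ w ∈ polarSet K, ∀ θ : ℝ, cos θ * inner ℝ x w + sin θ * (b * inner ℝ y w) ≤ 1 := by
        simp only [mem_iff_forall_mem_polarSet_inner_le_one hconv hcompact.isClosed h0,
          inner_add_left, real_inner_smul_left, mul_assoc, mul_left_comm b]
        exact ⟨fun h w hw θ => h θ w hw, fun h θ w hw => h w hw θ⟩
    _ ↔ ∀ w ∈ polarSet K, inner ℝ x w ^ 2 + b ^ 2 * inner ℝ y w ^ 2 ≤ 1 := by
        simp only [forall_cos_mul_add_sin_mul_le_one_iff, mul_pow]

/-- For a symmetric convex body K, the centered ellipse θ ↦ (cos θ)•x + b(sin θ)•y lies in K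
iff ⟨x,w⟩² + b²⟨y,w⟩² ≤ 1 for all w in the polar K*. -/
theorem stmt_16 {n : ℕ} (hn : 1 ≤ n) (K : Set (EuclideanSpace ℝ (Fin n)))
    (hK : IsConvexBody K) (hsym : K = -K) (x y : EuclideanSpace ℝ (Fin n))
    (b : ℝ) (hb : 0 < b) :
    (∀ θ : ℝ, (Real.cos θ) • x + (b * Real.sin θ) • y ∈ K) ↔
      ∀ w ∈ polarSet K, (inner ℝ x w : ℝ) ^ 2 + b ^ 2 * (inner ℝ y w : ℝ) ^ 2 ≤ 1 :=
  stmt_16_general K hK hsym x y b
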